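/- For q ≡ 1 (mod 4) prime and odd e ≥ 3, the second-largest absolute value λ(G_{q^e}) of an eigenvalue of the adjacency matrix of G_{q^e} equals (q^{e−1/2} + q^{e−1})/2, and in particular λ(G_{q^e}) = Ω(d^{1/2 + (e−1)/(2e)}) is superlinear in √d, where d = (q^e − q^{e−1})/2 is the degree. -/

import Mathlib

/-- The character χ_{q^e} : ℤ/q^eℤ → ℤ given by the Legendre symbol mod q of (the lift of) x. -/
def chi (q e : ℕ) [Fact q.Prime] (x : ZMod (q ^ e)) : ℤ := legendreSym q (x.val : ℤ)

/-- The graph G_{q^e}: vertex set ℤ/q^eℤ, with x ~ y iff χ_{q^e}(x−y)=1 (stated symmetrically;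
under the standing hypothesis q ≡ 1 (mod 4) the two conditions are equivalent). -/
def Gqe (q e : ℕ) [Fact q.Prime] : SimpleGraph (ZMod (q ^ e)) where
  Adj x y := x ≠ y ∧ chi q e (x - y) = 1 ∧ chi q e (y - x) = 1
  symm := ⟨fun _ _ ⟨h1, h2, h3⟩ => ⟨h1.symm, h3, h2⟩⟩
  loopless := ⟨fun _ h => h.1 rfl⟩

open Classical in
/-- The adjacency matrix of G_{q^e} with real entries. -/
noncomputable def adjMat (q e : ℕ) [Fact q.Prime] :
    Matrix (ZMod (q ^ e)) (ZMod (q ^ e)) ℝ :=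
  fun x y => if (Gqe q e).Adj x y then 1 else 0

/-- λ(G_{q^e}): the largest absolute value of an adjacency eigenvalue other than the trivial
(largest) eigenvalue d = (q^e−q^{e−1})/2. -/
noncomputable def lamG (q e : ℕ) [Fact q.Prime] : ℝ :=
  sSup {x : ℝ | ∃ μ : ℝ, x = |μ| ∧ μ ≠ ((q : ℝ) ^ e - (q : ℝ) ^ (e - 1)) / 2 ∧
    ∃ v : ZMod (q ^ e) → ℝ, v ≠ 0 ∧ (adjMat q e).mulVec v = μ • v}

/-!
`G_{q^e}` is the Cayley graph on `ZMod (q^e)` whose connection set is the preimage of the nonzero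
squares of `ZMod q` (symmetric because `-1` is a square when `q ≡ 1 mod 4`), so its adjacency
matrix is circulant and its eigenvalues are the Fourier coefficients of that indicator. The
indicator is `q`-periodic, so its coefficient at `b` vanishes unless `b = q^{e-1} c`, and then it
is `q^{e-1}` times the Paley eigenvalue `(q [c = 0] + g(c) - 1) / 2`, where the quadratic Gauss
sum `g(c)` squares to `q` for `c ≠ 0` and takes both signs `±√q` (replace `c` by a nonsquare
multiple of it). Hence the eigenvalues other than the degree are `0` and `q^{e-1}(±√q - 1)/2`,
and the largest absolute value is `q^{e-1}(√q + 1)/2 ≥ q^{e-1/2}/2 ≥ d^{1/2 + (e-1)/(2e)}/2`.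
-/

open Finset AddChar Matrix
open scoped ZMod

lemma Matrix.mulVec_re {n : Type*} [Fintype n] (A : Matrix n n ℝ) (w : n → ℂ) :
    A *ᵥ (fun i => (w i).re) = fun i => ((A.map Complex.ofRealHom *ᵥ w) i).re := by
  ext i
  simp [mulVec, dotProduct, Complex.re_sum]

namespace ZMod

variable {N : ℕ} [NeZero N] {E : Type*} [AddCommGroup E] [Module ℂ E]

lemma stdAddChar_eq_one_iff {x : ZMod N} : stdAddChar x = 1 ↔ x = 0 :=
  ⟨fun h => injective_stdAddChar (h.trans (map_zero_eq_one _).symm),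
    fun h => h ▸ map_zero_eq_one _⟩

lemma dft_eq_zero_of_add_right_eq {Φ : ZMod N → E} {p : ZMod N} (hΦ : ∀ j, Φ (j + p) = Φ j)
    {k : ZMod N} (hk : p * k ≠ 0) : 𝓕 Φ k = 0 := by
  have hshift : 𝓕 Φ k = stdAddChar (-(p * k)) • 𝓕 Φ k := by
    rw [dft_apply, smul_sum]
    refine (Fintype.sum_equiv (Equiv.addRight p) _ _ fun j => ?_).symm
    rw [Equiv.coe_addRight, hΦ, smul_smul, ← map_add_eq_mul, add_mul, neg_add, add_comm]
  have hψ : (1 : ℂ) - stdAddChar (-(p * k)) ≠ 0 :=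
    sub_ne_zero.mpr fun h => hk (neg_eq_zero.mp (stdAddChar_eq_one_iff.mp h.symm))
  have : ((1 : ℂ) - stdAddChar (-(p * k))) • 𝓕 Φ k = 0 := by
    rw [sub_smul, one_smul, ← hshift, sub_self]
  exact (smul_eq_zero.mp this).resolve_left hψ

variable {q : ℕ} [NeZero q]

lemma sum_comp_castHom {M : Type*} [AddCommMonoid M] (hq : q ∣ N) (F : ZMod q → M) :
    ∑ j : ZMod N, F (castHom hq (ZMod q) j) = (N / q) • ∑ a, F a := by
  classical
  set π := castHom hq (ZMod q)
  have hfiber (a : ZMod q) : Fintype.card {j // π j = a} = Fintype.card {j // π j = 0} := by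
    simp only [Fintype.card_subtype]
    exact AddMonoidHom.card_fiber_eq_of_mem_range π.toAddMonoidHom
      (castHom_surjective hq a) (castHom_surjective hq 0)
  have hcard : Fintype.card {j // π j = 0} = N / q := by
    have := Fintype.card_congr (Equiv.sigmaFiberEquiv π)
    rw [Fintype.card_sigma, ZMod.card, Finset.sum_congr rfl fun a _ => hfiber a, sum_const,
      card_univ, ZMod.card, smul_eq_mul] at this
    exact Nat.eq_div_of_mul_eq_right (NeZero.ne q) this
  rw [← Fintype.sum_fiberwise' π F, smul_sum]
  simp only [sum_const, card_univ, hfiber, hcard]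

lemma stdAddChar_natCast_div_mul (hq : q ∣ N) (x : ZMod N) :
    stdAddChar (((N / q : ℕ) : ZMod N) * x) = stdAddChar (castHom hq (ZMod q) x) := by
  obtain ⟨m, rfl⟩ := hq
  have hm : m ≠ 0 := right_ne_zero_of_mul (NeZero.ne (q * m))
  have hx : x = ((x.val : ℤ) : ZMod (q * m)) := by simp
  rw [hx, map_intCast, Nat.mul_div_cancel_left _ (Nat.pos_of_neZero q), ← Int.cast_natCast,
    ← Int.cast_mul, stdAddChar_coe, stdAddChar_coe]
  congr 1
  push_cast
  field_simp

lemma exists_eq_natCast_div_mul_of_mul_eq_zero (hq : q ∣ N) {b : ZMod N}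
    (hb : (q : ZMod N) * b = 0) :
    ∃ c : ZMod N, b = ((N / q : ℕ) : ZMod N) * c := by
  obtain ⟨m, rfl⟩ := hq
  have hdvd : q * m ∣ q * b.val := by
    rw [← ZMod.natCast_eq_zero_iff, Nat.cast_mul, ZMod.natCast_val, ZMod.cast_id', id]
    exact hb
  obtain ⟨t, ht⟩ := Nat.dvd_of_mul_dvd_mul_left (Nat.pos_of_neZero q) hdvd
  refine ⟨t, ?_⟩
  rw [← ZMod.natCast_zmod_val b, ht, Nat.mul_div_cancel_left _ (Nat.pos_of_neZero q),
    Nat.cast_mul]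

lemma dft_comp_castHom_natCast_div_mul (hq : q ∣ N) (Φ : ZMod q → E) (c : ZMod N) :
    𝓕 (fun j => Φ (castHom hq (ZMod q) j)) (((N / q : ℕ) : ZMod N) * c)
      = (N / q) • 𝓕 Φ (castHom hq (ZMod q) c) := by
  rw [dft_apply, dft_apply, ← sum_comp_castHom hq]
  refine sum_congr rfl fun j _ => ?_
  rw [show -(j * (((N / q : ℕ) : ZMod N) * c)) = ((N / q : ℕ) : ZMod N) * -(j * c) by ring,
    stdAddChar_natCast_div_mul, map_neg, map_mul]

lemma circulant_mulVec_stdAddChar (v : ZMod N → ℂ) (k : ZMod N) :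
    circulant v *ᵥ (fun j => stdAddChar (j * k)) = 𝓕 v k • fun j => stdAddChar (j * k) := by
  ext i
  simp only [mulVec, dotProduct, circulant_apply, Pi.smul_apply, smul_eq_mul, dft_apply, sum_mul]
  refine Fintype.sum_equiv (Equiv.subLeft i) _ _ fun j => ?_
  rw [Equiv.subLeft_apply, mul_comm (stdAddChar _), mul_assoc, ← map_add_eq_mul,
    show -((i - j) * k) + i * k = j * k by ring]

lemma dft_circulant_mulVec (v w : ZMod N → ℂ) : 𝓕 (circulant v *ᵥ w) = 𝓕 v * 𝓕 w := by
  ext k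
  simp only [dft_apply, mulVec, dotProduct, circulant_apply, Pi.mul_apply, smul_eq_mul, mul_sum,
    sum_mul]
  rw [sum_comm]
  refine sum_congr rfl fun j _ => ?_
  refine Fintype.sum_equiv (Equiv.subRight j) _ _ fun i => ?_
  rw [Equiv.subRight_apply]
  have : stdAddChar (-(i * k)) = stdAddChar (-((i - j) * k)) * stdAddChar (-(j * k)) := by
    rw [← map_add_eq_mul]; ring_nf
  rw [this]; ring

lemma exists_dft_eq_of_circulant_mulVec_eq_smul {v w : ZMod N → ℂ} {μ : ℂ}
    (h : circulant v *ᵥ w = μ • w) (hw : w ≠ 0) : ∃ k, 𝓕 v k = μ := by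
  obtain ⟨k, hk⟩ : ∃ k, 𝓕 w k ≠ 0 :=
    Function.ne_iff.mp ((map_ne_zero_iff _ dft.injective).mpr hw)
  refine ⟨k, mul_right_cancel₀ hk ?_⟩
  have := congr_fun (dft_circulant_mulVec v w) k
  rwa [h, dft_const_smul, Pi.smul_apply, smul_eq_mul, Pi.mul_apply, eq_comm] at this

end ZMod

namespace ZMod

variable {q : ℕ} [Fact q.Prime]

noncomputable def quadraticDirichletChar (q : ℕ) [Fact q.Prime] : DirichletCharacter ℂ q :=
  (quadraticChar (ZMod q)).ringHomComp (Int.castRingHom ℂ)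

lemma quadraticDirichletChar_apply (a : ZMod q) :
    quadraticDirichletChar q a = quadraticChar (ZMod q) a :=
  rfl

lemma ringChar_ne_two_of_mod_four_eq_one (hq4 : q % 4 = 1) : ringChar (ZMod q) ≠ 2 := by
  rw [ZMod.ringChar_zmod_n]; omega

lemma quadraticDirichletChar_ne_one (hq4 : q % 4 = 1) : quadraticDirichletChar q ≠ 1 :=
  (MulChar.ringHomComp_ne_one_iff Int.cast_injective).mpr
    (quadraticChar_ne_one (ringChar_ne_two_of_mod_four_eq_one hq4))

lemma dft_quadraticDirichletChar_zero (hq4 : q % 4 = 1) :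
    𝓕 (quadraticDirichletChar q) 0 = 0 := by
  rw [dft_apply_zero]
  exact MulChar.sum_eq_zero_of_ne_one (quadraticDirichletChar_ne_one hq4)

lemma dft_quadraticDirichletChar_sq (hq4 : q % 4 = 1) {c : ZMod q} (hc : c ≠ 0) :
    𝓕 (quadraticDirichletChar q) c ^ 2 = q := by
  have hq2 := ringChar_ne_two_of_mod_four_eq_one hq4
  have hquad : (quadraticDirichletChar q).IsQuadratic := (quadraticChar_isQuadratic (ZMod q)).comp _
  rw [DirichletCharacter.fourierTransform_eq_gaussSum_mulShift,
    gaussSum_sq (χ := quadraticDirichletChar q) (quadraticDirichletChar_ne_one hq4) hquad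
      (IsPrimitive.of_ne_one (isPrimitive_stdAddChar q (neg_ne_zero.mpr hc))),
    quadraticDirichletChar_apply, quadraticChar_neg_one hq2, ZMod.card,
    ZMod.χ₄_nat_one_mod_four hq4]
  simp

lemma dft_quadraticDirichletChar_eq_sqrt_or (hq4 : q % 4 = 1) {c : ZMod q} (hc : c ≠ 0) :
    𝓕 (quadraticDirichletChar q) c = √q ∨ 𝓕 (quadraticDirichletChar q) c = -√q := by
  have : 𝓕 (quadraticDirichletChar q) c ^ 2 = (√q : ℂ) ^ 2 := by
    rw [dft_quadraticDirichletChar_sq hq4 hc, ← Complex.ofReal_pow,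
      Real.sq_sqrt (Nat.cast_nonneg _)]
    simp
  exact sq_eq_sq_iff_eq_or_eq_neg.mp this

lemma exists_dft_quadraticDirichletChar_eq_neg_sqrt (hq4 : q % 4 = 1) :
    ∃ c : ZMod q, 𝓕 (quadraticDirichletChar q) c = -√q := by
  obtain ⟨u, hu⟩ := FiniteField.exists_nonsquare (ringChar_ne_two_of_mod_four_eq_one hq4)
  lift u to (ZMod q)ˣ using (show u ≠ 0 by rintro rfl; exact hu ⟨0, by ring⟩).isUnit
  have hflip (k : ZMod q) :
      𝓕 (quadraticDirichletChar q) (u⁻¹.val * k) = -𝓕 (quadraticDirichletChar q) k := by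
    rw [← dft_comp_unitMul]
    have : (fun j => quadraticDirichletChar q (u.val * j))
        = (-1 : ℂ) • ⇑(quadraticDirichletChar q) := by
      ext j
      rw [map_mul, quadraticDirichletChar_apply, quadraticChar_neg_one_iff_not_isSquare.mpr hu]
      simp
    rw [this, dft_const_smul, Pi.smul_apply, neg_one_smul]
  rcases dft_quadraticDirichletChar_eq_sqrt_or hq4 one_ne_zero with h | h
  · exact ⟨_, by rw [hflip, h]⟩
  · exact ⟨1, h⟩

noncomputable def squareIndicator (q : ℕ) [Fact q.Prime] (a : ZMod q) : ℂ :=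
  if quadraticChar (ZMod q) a = 1 then 1 else 0

lemma two_mul_dft_squareIndicator (c : ZMod q) :
    2 * 𝓕 (squareIndicator q) c
      = (if c = 0 then (q : ℂ) else 0) + 𝓕 (quadraticDirichletChar q) c - 1 := by
  have hpt (a : ZMod q) : 2 * squareIndicator q a
      = 1 + quadraticDirichletChar q a - if a = 0 then 1 else 0 := by
    rw [squareIndicator, quadraticDirichletChar_apply]
    rcases eq_or_ne a 0 with rfl | ha
    · simp
    · rcases quadraticChar_dichotomy ha with h | h <;> simp [h, ha]; norm_num
  have hsum : ∑ j : ZMod q, stdAddChar (-(j * c)) = if c = 0 then (q : ℂ) else 0 := by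
    simp_rw [← mul_neg]
    rw [sum_mulShift _ (isPrimitive_stdAddChar q)]
    simp [ZMod.card]
  simp only [dft_apply, smul_eq_mul, mul_sum]
  rw [sum_congr rfl fun j _ => by rw [mul_left_comm, hpt]]
  simp only [mul_sub, mul_add, mul_one, sum_sub_distrib, sum_add_distrib, hsum, mul_ite, mul_zero,
    sum_ite_eq', mem_univ, if_true]
  rw [zero_mul, neg_zero, map_zero_eq_one]

end ZMod

section Gqe

variable {q e : ℕ} [Fact q.Prime]

open ZMod

lemma chi_eq_quadraticChar (he : e ≠ 0) (s : ZMod (q ^ e)) :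
    chi q e s = quadraticChar (ZMod q) (castHom (dvd_pow_self q he) (ZMod q) s) := by
  rw [chi, legendreSym, castHom_apply, Int.cast_natCast, natCast_val]

lemma chi_neg (hq4 : q % 4 = 1) (he : e ≠ 0) (s : ZMod (q ^ e)) : chi q e (-s) = chi q e s := by
  rw [chi_eq_quadraticChar he, chi_eq_quadraticChar he, map_neg, neg_eq_neg_one_mul, map_mul,
    quadraticChar_neg_one (ringChar_ne_two_of_mod_four_eq_one hq4), ZMod.card,
    χ₄_nat_one_mod_four hq4, one_mul]

lemma chi_zero : chi q e 0 = 0 := by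
  simp [chi]

lemma gqe_adj_iff (hq4 : q % 4 = 1) (he : e ≠ 0) {x y : ZMod (q ^ e)} :
    (Gqe q e).Adj x y ↔ chi q e (x - y) = 1 := by
  refine ⟨fun h => h.2.1, fun h => ⟨fun hxy => ?_, h, ?_⟩⟩
  · rw [hxy, sub_self, chi_zero] at h
    exact zero_ne_one h
  · rwa [← neg_sub, chi_neg hq4 he]

noncomputable def cayleyWeight (q e : ℕ) [Fact q.Prime] (s : ZMod (q ^ e)) : ℂ :=
  if chi q e s = 1 then 1 else 0

lemma adjMat_map_ofReal (hq4 : q % 4 = 1) (he : e ≠ 0) :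
    (adjMat q e).map Complex.ofRealHom = circulant (cayleyWeight q e) := by
  ext x y
  simp only [map_apply, adjMat, circulant_apply, cayleyWeight, gqe_adj_iff hq4 he]
  split_ifs <;> simp

lemma two_mul_dft_cayleyWeight_natCast_mul (he : e ≠ 0) (c : ZMod (q ^ e)) :
    2 * 𝓕 (cayleyWeight q e) (((q ^ e / q : ℕ) : ZMod (q ^ e)) * c)
      = (q : ℂ) ^ (e - 1) * ((if castHom (dvd_pow_self q he) (ZMod q) c = 0 then (q : ℂ) else 0)
          + 𝓕 (quadraticDirichletChar q) (castHom (dvd_pow_self q he) (ZMod q) c) - 1) := by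
  have hm : q ^ e / q = q ^ (e - 1) := by
    rw [← Nat.pow_div (Nat.one_le_iff_ne_zero.mpr he) (Fact.out : q.Prime).pos, pow_one]
  have hw : cayleyWeight q e
      = fun s => squareIndicator q (castHom (dvd_pow_self q he) (ZMod q) s) := by
    ext s
    rw [cayleyWeight, squareIndicator, chi_eq_quadraticChar he]
  rw [hw, dft_comp_castHom_natCast_div_mul, nsmul_eq_mul, mul_left_comm,
    two_mul_dft_squareIndicator, hm, Nat.cast_pow]

lemma dft_cayleyWeight_of_natCast_mul_ne_zero (he : e ≠ 0) {b : ZMod (q ^ e)}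
    (hb : (q : ZMod (q ^ e)) * b ≠ 0) : 𝓕 (cayleyWeight q e) b = 0 := by
  refine dft_eq_zero_of_add_right_eq (fun j => ?_) hb
  simp only [cayleyWeight, chi_eq_quadraticChar he, map_add, map_natCast, natCast_self, add_zero]

lemma dft_cayleyWeight_cases (hq4 : q % 4 = 1) (he : e ≠ 0) (b : ZMod (q ^ e)) :
    𝓕 (cayleyWeight q e) b = (((q : ℝ) ^ e - (q : ℝ) ^ (e - 1)) / 2 : ℝ)
      ∨ 𝓕 (cayleyWeight q e) b = 0
      ∨ 𝓕 (cayleyWeight q e) b = ((q : ℝ) ^ (e - 1) * (√q - 1) / 2 : ℝ)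
      ∨ 𝓕 (cayleyWeight q e) b = (-((q : ℝ) ^ (e - 1) * (√q + 1)) / 2 : ℝ) := by
  by_cases hb : (q : ZMod (q ^ e)) * b = 0
  · obtain ⟨c, rfl⟩ := exists_eq_natCast_div_mul_of_mul_eq_zero (dvd_pow_self q he) hb
    have h := two_mul_dft_cayleyWeight_natCast_mul he c
    set c' := castHom (dvd_pow_self q he) (ZMod q) c
    by_cases hc : c' = 0
    · rw [if_pos hc, hc, dft_quadraticDirichletChar_zero hq4] at h
      left
      push_cast
      rw [show (q : ℂ) ^ e = q ^ (e - 1) * q by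
        rw [← pow_succ, Nat.sub_add_cancel (Nat.one_le_iff_ne_zero.mpr he)]]
      linear_combination h / 2
    · rw [if_neg hc] at h
      right; right
      rcases dft_quadraticDirichletChar_eq_sqrt_or hq4 hc with hg | hg <;> rw [hg] at h
      · left; push_cast; linear_combination h / 2
      · right; push_cast; linear_combination h / 2
  · exact Or.inr (Or.inl (dft_cayleyWeight_of_natCast_mul_ne_zero he hb))

lemma exists_dft_cayleyWeight_eq (hq4 : q % 4 = 1) (he : e ≠ 0) :
    ∃ b, 𝓕 (cayleyWeight q e) b = (-((q : ℝ) ^ (e - 1) * (√q + 1)) / 2 : ℝ) := by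
  obtain ⟨c', hc'⟩ := exists_dft_quadraticDirichletChar_eq_neg_sqrt hq4
  have hc0 : c' ≠ 0 := by
    rintro rfl
    rw [dft_quadraticDirichletChar_zero hq4, zero_eq_neg, Complex.ofReal_eq_zero,
      Real.sqrt_eq_zero (Nat.cast_nonneg _)] at hc'
    exact (Fact.out : q.Prime).ne_zero (by exact_mod_cast hc')
  obtain ⟨c, rfl⟩ := castHom_surjective (dvd_pow_self q he) c'
  refine ⟨((q ^ e / q : ℕ) : ZMod (q ^ e)) * c, ?_⟩
  have h := two_mul_dft_cayleyWeight_natCast_mul he c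
  rw [if_neg hc0, hc'] at h
  push_cast
  linear_combination h / 2

lemma exists_dft_cayleyWeight_eq_of_mulVec_eq_smul (hq4 : q % 4 = 1) (he : e ≠ 0) {μ : ℝ}
    {v : ZMod (q ^ e) → ℝ} (hv : v ≠ 0) (h : adjMat q e *ᵥ v = μ • v) :
    ∃ b, 𝓕 (cayleyWeight q e) b = μ := by
  refine exists_dft_eq_of_circulant_mulVec_eq_smul (w := Complex.ofRealHom ∘ v) ?_ ?_
  · ext i
    rw [← adjMat_map_ofReal hq4 he, ← RingHom.map_mulVec, h]
    simp
  · exact fun h0 => hv (funext fun i => Complex.ofReal_eq_zero.mp (congr_fun h0 i))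

lemma exists_mulVec_eq_smul_of_dft_cayleyWeight_eq (hq4 : q % 4 = 1) (he : e ≠ 0) {r : ℝ}
    {b : ZMod (q ^ e)} (h : 𝓕 (cayleyWeight q e) b = r) :
    ∃ v : ZMod (q ^ e) → ℝ, v ≠ 0 ∧ adjMat q e *ᵥ v = r • v := by
  refine ⟨fun x => (stdAddChar (x * b)).re, fun h0 => ?_, ?_⟩
  · simpa using congr_fun h0 0
  · rw [Matrix.mulVec_re, adjMat_map_ofReal hq4 he, circulant_mulVec_stdAddChar, h]
    ext x
    simp

end Gqe

lemma lamG_eq {q e : ℕ} [Fact q.Prime] (hq4 : q % 4 = 1) (he : e ≠ 0) :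
    lamG q e = ((q : ℝ) ^ (e - 1) * √q + (q : ℝ) ^ (e - 1)) / 2 := by
  have hq : (1 : ℝ) ≤ q := by exact_mod_cast (Fact.out : q.Prime).one_lt.le
  have hm : 0 < (q : ℝ) ^ (e - 1) := by positivity
  have hs : 1 ≤ √(q : ℝ) := Real.one_le_sqrt.mpr hq
  have hd : (q : ℝ) ^ (e - 1) ≤ (q : ℝ) ^ e := pow_le_pow_right₀ hq (Nat.sub_le e 1)
  refine IsGreatest.csSup_eq ⟨?_, ?_⟩
  · obtain ⟨b, hb⟩ := exists_dft_cayleyWeight_eq hq4 he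
    obtain ⟨v, hv, heig⟩ := exists_mulVec_eq_smul_of_dft_cayleyWeight_eq hq4 he hb
    refine ⟨_, ?_, ?_, v, hv, heig⟩
    · rw [abs_of_neg (by nlinarith)]
      ring
    · intro h; nlinarith
  · rintro _ ⟨μ, rfl, hμd, v, hv, heig⟩
    obtain ⟨b, hb⟩ := exists_dft_cayleyWeight_eq_of_mulVec_eq_smul hq4 he hv heig
    rcases dft_cayleyWeight_cases hq4 he b with h | h | h | h
    · exact absurd (Complex.ofReal_injective (hb.symm.trans h)) hμd
    · rw [Complex.ofReal_eq_zero.mp (hb.symm.trans h), abs_zero]; positivity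
    · rw [Complex.ofReal_injective (hb.symm.trans h), abs_of_nonneg (by nlinarith)]; nlinarith
    · rw [Complex.ofReal_injective (hb.symm.trans h), abs_of_neg (by nlinarith)]; nlinarith

lemma rpow_le_pow_mul_sqrt {x : ℝ} (hx : 1 ≤ x) {e : ℕ} (he : e ≠ 0) :
    ((x ^ e - x ^ (e - 1)) / 2) ^ ((1 : ℝ) / 2 + ((e : ℝ) - 1) / (2 * (e : ℝ)))
      ≤ x ^ (e - 1) * √x := by
  have hx0 : 0 < x := by linarith
  have heR : (1 : ℝ) ≤ e := by exact_mod_cast Nat.one_le_iff_ne_zero.mpr he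
  have hpow : x ^ (e - 1) ≤ x ^ e := pow_le_pow_right₀ hx (Nat.sub_le e 1)
  have hexp : (e : ℝ) * ((1 : ℝ) / 2 + ((e : ℝ) - 1) / (2 * (e : ℝ)))
      = ((e - 1 : ℕ) : ℝ) + 1 / 2 := by
    rw [Nat.cast_sub (by omega)]
    field_simp
    ring
  calc ((x ^ e - x ^ (e - 1)) / 2) ^ ((1 : ℝ) / 2 + ((e : ℝ) - 1) / (2 * (e : ℝ)))
      ≤ (x ^ e) ^ ((1 : ℝ) / 2 + ((e : ℝ) - 1) / (2 * (e : ℝ))) := by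
        apply Real.rpow_le_rpow (by linarith) (by linarith [pow_pos hx0 (e - 1)])
        positivity
    _ = x ^ (e - 1) * √x := by
        rw [← Real.rpow_natCast x e, ← Real.rpow_mul hx0.le, hexp, Real.rpow_add hx0,
          Real.rpow_natCast, ← Real.sqrt_eq_rpow]

theorem stmt_14_general (e : ℕ) (he3 : 3 ≤ e) :
    (∀ (q : ℕ) [Fact q.Prime], q % 4 = 1 →
        lamG q e = ((q : ℝ) ^ (e - 1) * Real.sqrt q + (q : ℝ) ^ (e - 1)) / 2) ∧
      ∃ c : ℝ, 0 < c ∧ ∀ (q : ℕ) [Fact q.Prime], q % 4 = 1 →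
        c * ((((q : ℝ) ^ e - (q : ℝ) ^ (e - 1)) / 2)
              ^ ((1 : ℝ) / 2 + ((e : ℝ) - 1) / (2 * (e : ℝ)))) ≤ lamG q e := by
  have he : e ≠ 0 := by omega
  refine ⟨fun q _ hq4 => lamG_eq hq4 he, 1 / 2, by norm_num, fun q _ hq4 => ?_⟩
  have hq : (1 : ℝ) ≤ q := by exact_mod_cast (Fact.out : q.Prime).one_lt.le
  have := rpow_le_pow_mul_sqrt hq he
  rw [lamG_eq hq4 he]
  linarith [pow_pos (by linarith : (0 : ℝ) < q) (e - 1)]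

/-- For primes q ≡ 1 (mod 4) and odd e ≥ 3, λ(G_{q^e}) = (q^{e−1/2}+q^{e−1})/2,
and λ(G_{q^e}) = Ω(d^{1/2 + (e−1)/(2e)}) where d = (q^e−q^{e−1})/2 is the degree. -/
theorem stmt_14 (e : ℕ) (he : Odd e) (he3 : 3 ≤ e) :
    (∀ (q : ℕ) [Fact q.Prime], q % 4 = 1 →
        lamG q e = ((q : ℝ) ^ (e - 1) * Real.sqrt q + (q : ℝ) ^ (e - 1)) / 2) ∧
      ∃ c : ℝ, 0 < c ∧ ∀ (q : ℕ) [Fact q.Prime], q % 4 = 1 →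
        c * ((((q : ℝ) ^ e - (q : ℝ) ^ (e - 1)) / 2)
              ^ ((1 : ℝ) / 2 + ((e : ℝ) - 1) / (2 * (e : ℝ)))) ≤ lamG q e :=
  stmt_14_general e he3
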